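/- arXiv:math/0609149 — 3 statements merged into one kernel-verified Lean document; each statement's English description precedes it below -/
import Mathlib

section
/- With notation as in the covariant KSGNS construction, the KSGNS representation Φ_ρ of A on E_ρ, defined by Φ_ρ(a)(b ⊗ ξ + N_ρ) = ab ⊗ ξ + N_ρ, together with the unitary representation v of G defined by v_g(b ⊗ ξ + N_ρ) = α_g(b) ⊗ u_g ξ + N_ρ, satisfies the covariance relation Φ_ρ(α_g(a)) = v_g Φ_ρ(a) v_g* for all g ∈ G and a ∈ A. -/
open Matrix

/-- The December 2024 Mathlib `CStarModule` (right Hilbert C⋆-module, `SMul Aᵐᵒᵖ E`). -/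
class CStarModuleOld (A : outParam <| Type*) (E : Type*) [NonUnitalSemiring A] [StarRing A]
    [Module ℂ A] [AddCommGroup E] [Module ℂ E] [PartialOrder A] [SMul Aᵐᵒᵖ E] [Norm A] [Norm E]
    extends Inner A E where
  inner_add_right {x} {y} {z} : inner x (y + z) = inner x y + inner x z
  inner_self_nonneg {x} : 0 ≤ inner x x
  inner_self {x} : inner x x = 0 ↔ x = 0
  inner_op_smul_right {a : A} {x y : E} : inner x (MulOpposite.op a • y) = inner x y * a
  inner_smul_right_complex {z : ℂ} {x} {y} : inner x (z • y) = z • inner x y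
  star_inner x y : star (inner x y) = inner y x
  norm_eq_sqrt_norm_inner_self x : ‖x‖ = √‖inner x x‖

/-!
On a generator `k b ξ` both `Φρ (α g a) ∘ v g` and `v g ∘ Φρ a` give `k (α g a * α g b) (u g ξ)`,
so they agree by density of the span of the generators; composing on the right with
`v g⁻¹ = (v g)⁻¹` yields the covariance relation.
-/

theorem rep_map_comp_eq_comp_of_dense_span
    {R A E F Fσ : Type*} [Semiring R] [Mul A] [FunLike Fσ A A] [MulHomClass Fσ A A]
    [TopologicalSpace F] [AddCommMonoid F] [Module R F] [T2Space F]
    (k : A → E → F) (hk_dense : Dense (↑(Submodule.span R {y : F | ∃ a ξ, y = k a ξ}) : Set F))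
    (σ : Fσ) (t : E → E) (w : F →L[R] F) (hw : ∀ b ξ, w (k b ξ) = k (σ b) (t ξ))
    (Φ : A → F →L[R] F) (hΦ : ∀ a b ξ, Φ a (k b ξ) = k (a * b) ξ) (a : A) :
    (Φ (σ a)).comp w = w.comp (Φ a) := by
  apply ContinuousLinearMap.ext_on hk_dense
  rintro _ ⟨b, ξ, rfl⟩
  simp only [ContinuousLinearMap.comp_apply, hw, hΦ, map_mul]

theorem stmt4_general
    {A : Type*} [CStarAlgebra A]
    {E : Type*} [NormedAddCommGroup E] [NormedSpace ℂ E]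
    {G : Type*} [Group G]
    (α : G → A ≃⋆ₐ[ℂ] A)
    (u : G → E →L[ℂ] E)
    {Eρ : Type*} [NormedAddCommGroup Eρ] [NormedSpace ℂ Eρ]
    (k : A → E → Eρ)
    (hk_dense : Dense (↑(Submodule.span ℂ {y : Eρ | ∃ (a : A) (ξ : E), y = k a ξ}) : Set Eρ))
    -- v : the unitary representation of G on E_ρ induced by u and α
    (v : G → Eρ →L[ℂ] Eρ)
    (hv : ∀ (g : G) (a : A) (ξ : E), v g (k a ξ) = k (α g a) (u g ξ))
    (hv_one : v 1 = ContinuousLinearMap.id ℂ Eρ)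
    (hv_mul : ∀ g h : G, v (g * h) = (v g).comp (v h))
    -- Φρ : the KSGNS representation of A on E_ρ
    (Φρ : A → Eρ →L[ℂ] Eρ)
    (hΦρ : ∀ (a b : A) (ξ : E), Φρ a (k b ξ) = k (a * b) ξ) :
    ∀ (g : G) (a : A), Φρ (α g a) = ((v g).comp (Φρ a)).comp (v g⁻¹) := by
  intro g a
  have hv_inv : (v g).comp (v g⁻¹) = ContinuousLinearMap.id ℂ Eρ := by
    rw [← hv_mul, mul_inv_cancel, hv_one]
  calc Φρ (α g a) = ((Φρ (α g a)).comp (v g)).comp (v g⁻¹) := by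
        rw [ContinuousLinearMap.comp_assoc, hv_inv, ContinuousLinearMap.comp_id]
    _ = ((v g).comp (Φρ a)).comp (v g⁻¹) := by
        rw [rep_map_comp_eq_comp_of_dense_span k hk_dense (α g) (u g) (v g) (hv g) Φρ hΦρ]

/-- The KSGNS representation Φ_ρ(a)(b ⊗ ξ + N_ρ) = ab ⊗ ξ + N_ρ together with
the unitary representation v_g(b ⊗ ξ + N_ρ) = α_g(b) ⊗ u_g ξ + N_ρ satisfies the covariance
relation Φ_ρ(α_g(a)) = v_g Φ_ρ(a) v_g* (with v_g* = v_{g⁻¹}). -/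
theorem stmt4
    {A : Type*} [CStarAlgebra A]
    {B : Type*} [NonUnitalCStarAlgebra B] [PartialOrder B] [StarOrderedRing B]
    {E : Type*} [NormedAddCommGroup E] [NormedSpace ℂ E] [SMul Bᵐᵒᵖ E] [CStarModuleOld B E]
    {G : Type*} [Group G]
    (α : G → A ≃⋆ₐ[ℂ] A)
    (hα : ∀ g h : G, α (g * h) = (α h).trans (α g))
    (u : G → E →L[ℂ] E)
    (hu_one : u 1 = ContinuousLinearMap.id ℂ E)
    (hu_mul : ∀ g h : G, u (g * h) = (u g).comp (u h))
    (hu_inner : ∀ (g : G) (x y : E), inner (𝕜 := B) (u g x) (u g y) = inner (𝕜 := B) x y)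
    (hu_surj : ∀ g : G, Function.Surjective (u g))
    (ρ : A →ₗ[ℂ] E →L[ℂ] E)
    (hCP : ∀ (n : ℕ) (x : Matrix (Fin n) (Fin n) A),
      (∃ y : Matrix (Fin n) (Fin n) A, x = yᴴ * y) →
      ∀ ξ : Fin n → E, 0 ≤ ∑ i, ∑ j, inner (𝕜 := B) (ξ i) (ρ (x i j) (ξ j)))
    (hcov : ∀ (g : G) (a : A), ρ (α g a) = ((u g).comp (ρ a)).comp (u g⁻¹))
    {Eρ : Type*} [NormedAddCommGroup Eρ] [NormedSpace ℂ Eρ] [SMul Bᵐᵒᵖ Eρ]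
    [CStarModuleOld B Eρ] [CompleteSpace Eρ]
    (k : A → E → Eρ)
    (hk_inner : ∀ (a b : A) (ξ η : E),
      inner (𝕜 := B) (k a ξ) (k b η) = inner (𝕜 := B) ξ (ρ (star a * b) η))
    (hk_addl : ∀ (a a' : A) (ξ : E), k (a + a') ξ = k a ξ + k a' ξ)
    (hk_addr : ∀ (a : A) (ξ η : E), k a (ξ + η) = k a ξ + k a η)
    (hk_smull : ∀ (c : ℂ) (a : A) (ξ : E), k (c • a) ξ = c • k a ξ)
    (hk_smulr : ∀ (c : ℂ) (a : A) (ξ : E), k a (c • ξ) = c • k a ξ)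
    (hk_opsmul : ∀ (a : A) (ξ : E) (b : B),
      k a (MulOpposite.op b • ξ) = MulOpposite.op b • k a ξ)
    (hk_dense : Dense (↑(Submodule.span ℂ {y : Eρ | ∃ (a : A) (ξ : E), y = k a ξ}) : Set Eρ))
    -- v : the unitary representation of G on E_ρ induced by u and α
    (v : G → Eρ →L[ℂ] Eρ)
    (hv : ∀ (g : G) (a : A) (ξ : E), v g (k a ξ) = k (α g a) (u g ξ))
    (hv_one : v 1 = ContinuousLinearMap.id ℂ Eρ)
    (hv_mul : ∀ g h : G, v (g * h) = (v g).comp (v h))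
    (hv_inner : ∀ (g : G) (x y : Eρ), inner (𝕜 := B) (v g x) (v g y) = inner (𝕜 := B) x y)
    (hv_surj : ∀ g : G, Function.Surjective (v g))
    -- Φρ : the KSGNS representation of A on E_ρ
    (Φρ : A → Eρ →L[ℂ] Eρ)
    (hΦρ : ∀ (a b : A) (ξ : E), Φρ a (k b ξ) = k (a * b) ξ) :
    ∀ (g : G) (a : A), Φρ (α g a) = ((v g).comp (Φρ a)).comp (v g⁻¹) :=
  stmt4_general α u k hk_dense v hv hv_one hv_mul Φρ hΦρ
end

section
/- Let ρ : A → L_B(E) be a nondegenerate u-covariant completely positive map with respect to a C*-dynamical system (G, A, α), with KSGNS triple (Φ_ρ, V_ρ, E_ρ) where V_ρ ξ = lim_λ (e_λ ⊗ ξ + N_ρ) for an approximate unit (e_λ) of A, and let v be the induced unitary representation of G on E_ρ. Then v_g V_ρ = V_ρ u_g for all g ∈ G. -/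
/-
Because `A` is unital, an approximate unit tends to `1` in norm, and for a positive map
`‖k a ζ‖² = ‖⟪ζ, ρ (a⋆a) ζ⟫‖ ≤ ‖a‖² ‖⟪ζ, ρ 1 ζ⟫‖`, so `a ↦ k a ζ` is continuous. Hence
`V_ρ ζ = k 1 ζ`, and `v_g (k 1 ξ) = k (α_g 1) (u_g ξ) = k 1 (u_g ξ)`.
-/

open Matrix Filter

open Topology

namespace CStarModuleOld

variable {B E : Type*} [NonUnitalCStarAlgebra B] [PartialOrder B]
  [NormedAddCommGroup E] [NormedSpace ℂ E] [SMul Bᵐᵒᵖ E] [CStarModuleOld B E]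

lemma inner_sub_right (x y z : E) :
    inner (𝕜 := B) x (y - z) = inner (𝕜 := B) x y - inner (𝕜 := B) x z := by
  rw [eq_sub_iff_add_eq, ← inner_add_right, sub_add_cancel]

lemma norm_sq_eq_norm_inner_self (x : E) : ‖x‖ ^ 2 = ‖inner (𝕜 := B) x x‖ := by
  rw [norm_eq_sqrt_norm_inner_self (A := B) x, Real.sq_sqrt (norm_nonneg _)]

end CStarModuleOld

section PositiveMap

variable {A B E : Type*} [CStarAlgebra A] [NonUnitalCStarAlgebra B] [PartialOrder B]
  [NormedAddCommGroup E] [NormedSpace ℂ E] [SMul Bᵐᵒᵖ E] [CStarModuleOld B E]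
  {ρ : A →ₗ[ℂ] E →L[ℂ] E}

lemma inner_apply_star_mul_self_nonneg_of_completelyPositive
    (hCP : ∀ (n : ℕ) (x : Matrix (Fin n) (Fin n) A),
      (∃ y : Matrix (Fin n) (Fin n) A, x = yᴴ * y) →
      ∀ ξ : Fin n → E, 0 ≤ ∑ i, ∑ j, inner (𝕜 := B) (ξ i) (ρ (x i j) (ξ j)))
    (a : A) (ζ : E) : 0 ≤ inner (𝕜 := B) ζ (ρ (star a * a) ζ) := by
  simpa using hCP 1 (Matrix.of fun _ _ => star a * a) ⟨Matrix.of fun _ _ => a, by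
    ext i j; simp [Matrix.mul_apply, Matrix.conjTranspose_apply]⟩ fun _ => ζ

variable [PartialOrder A] [StarOrderedRing A] [StarOrderedRing B]

lemma inner_apply_mono
    (hpos : ∀ (a : A) (ζ : E), 0 ≤ inner (𝕜 := B) ζ (ρ (star a * a) ζ))
    {x y : A} (hxy : x ≤ y) (ζ : E) :
    inner (𝕜 := B) ζ (ρ x ζ) ≤ inner (𝕜 := B) ζ (ρ y ζ) := by
  obtain ⟨s, hs⟩ := CStarAlgebra.nonneg_iff_eq_star_mul_self.mp (sub_nonneg.mpr hxy)
  have h := hpos s ζ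
  rwa [← hs, map_sub, _root_.sub_apply, CStarModuleOld.inner_sub_right, sub_nonneg] at h

lemma norm_inner_apply_star_mul_self_le
    (hpos : ∀ (a : A) (ζ : E), 0 ≤ inner (𝕜 := B) ζ (ρ (star a * a) ζ)) (a : A) (ζ : E) :
    ‖inner (𝕜 := B) ζ (ρ (star a * a) ζ)‖ ≤ ‖a‖ ^ 2 * ‖inner (𝕜 := B) ζ (ρ 1 ζ)‖ := by
  have hle := inner_apply_mono hpos (CStarAlgebra.star_mul_le_algebraMap_norm_sq (a := a)) ζ
  have hscalar : ρ (algebraMap ℝ A (‖a‖ ^ 2)) ζ = ((‖a‖ ^ 2 : ℝ) : ℂ) • ρ 1 ζ := by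
    rw [Algebra.algebraMap_eq_smul_one, ← algebraMap_smul ℂ, map_smul]
    rfl
  calc ‖inner (𝕜 := B) ζ (ρ (star a * a) ζ)‖
      ≤ ‖inner (𝕜 := B) ζ (ρ (algebraMap ℝ A (‖a‖ ^ 2)) ζ)‖ :=
        CStarAlgebra.norm_le_norm_of_nonneg_of_le (hpos a ζ) hle
    _ = ‖a‖ ^ 2 * ‖inner (𝕜 := B) ζ (ρ 1 ζ)‖ := by
        rw [hscalar, CStarModuleOld.inner_smul_right_complex, norm_smul, Complex.norm_real,
          Real.norm_of_nonneg (by positivity)]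

variable {Eρ : Type*} [NormedAddCommGroup Eρ] [NormedSpace ℂ Eρ] [SMul Bᵐᵒᵖ Eρ]
  [CStarModuleOld B Eρ] {k : A → E → Eρ}

lemma norm_ksgns_le
    (hpos : ∀ (a : A) (ζ : E), 0 ≤ inner (𝕜 := B) ζ (ρ (star a * a) ζ))
    (hk_inner : ∀ (a b : A) (ξ η : E),
      inner (𝕜 := B) (k a ξ) (k b η) = inner (𝕜 := B) ξ (ρ (star a * b) η))
    (a : A) (ζ : E) :
    ‖k a ζ‖ ≤ ‖a‖ * √‖inner (𝕜 := B) ζ (ρ 1 ζ)‖ := by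
  rw [← Real.sqrt_sq (norm_nonneg (k a ζ)), ← Real.sqrt_sq (norm_nonneg a), ← Real.sqrt_mul
    (sq_nonneg _), CStarModuleOld.norm_sq_eq_norm_inner_self (B := B), hk_inner]
  exact Real.sqrt_le_sqrt (norm_inner_apply_star_mul_self_le hpos a ζ)

lemma continuous_ksgns_left
    (hpos : ∀ (a : A) (ζ : E), 0 ≤ inner (𝕜 := B) ζ (ρ (star a * a) ζ))
    (hk_inner : ∀ (a b : A) (ξ η : E),
      inner (𝕜 := B) (k a ξ) (k b η) = inner (𝕜 := B) ξ (ρ (star a * b) η))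
    (hk_addl : ∀ (a a' : A) (ξ : E), k (a + a') ξ = k a ξ + k a' ξ)
    (ζ : E) : Continuous fun a => k a ζ :=
  AddMonoidHomClass.continuous_of_bound
    (AddMonoidHom.mk' (fun a => k a ζ) fun a a' => hk_addl a a' ζ) _
    fun a => (norm_ksgns_le hpos hk_inner a ζ).trans_eq (mul_comm _ _)

end PositiveMap

theorem stmt5_general
    {A : Type*} [CStarAlgebra A]
    {B : Type*} [NonUnitalCStarAlgebra B] [PartialOrder B] [StarOrderedRing B]
    {E : Type*} [NormedAddCommGroup E] [NormedSpace ℂ E] [SMul Bᵐᵒᵖ E] [CStarModuleOld B E]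
    {G : Type*} [Group G]
    (α : G → A ≃⋆ₐ[ℂ] A)
    (u : G → E →L[ℂ] E)
    (ρ : A →ₗ[ℂ] E →L[ℂ] E)
    (hCP : ∀ (n : ℕ) (x : Matrix (Fin n) (Fin n) A),
      (∃ y : Matrix (Fin n) (Fin n) A, x = yᴴ * y) →
      ∀ ξ : Fin n → E, 0 ≤ ∑ i, ∑ j, inner (𝕜 := B) (ξ i) (ρ (x i j) (ξ j)))
    {Eρ : Type*} [NormedAddCommGroup Eρ] [NormedSpace ℂ Eρ] [SMul Bᵐᵒᵖ Eρ]
    [CStarModuleOld B Eρ]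
    (k : A → E → Eρ)
    (hk_inner : ∀ (a b : A) (ξ η : E),
      inner (𝕜 := B) (k a ξ) (k b η) = inner (𝕜 := B) ξ (ρ (star a * b) η))
    (hk_addl : ∀ (a a' : A) (ξ : E), k (a + a') ξ = k a ξ + k a' ξ)
    -- v : the unitary representation of G on E_ρ induced by u and α
    (v : G → Eρ →L[ℂ] Eρ)
    (hv : ∀ (g : G) (a : A) (ξ : E), v g (k a ξ) = k (α g a) (u g ξ))
    [PartialOrder A] [StarOrderedRing A]
    -- (e_λ) is an approximate unit of A ...
    {Λ : Type*} [Nonempty Λ] [SemilatticeSup Λ]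
    (e : Λ → A)
    (he_apprR : ∀ a : A, Tendsto (fun l => a * e l) atTop (nhds a))
    -- V_ρ ξ = lim_λ (e_λ ⊗ ξ + N_ρ)
    (Vρ : E →L[ℂ] Eρ)
    (hVρ : ∀ ξ : E, Tendsto (fun l => k (e l) ξ) atTop (nhds (Vρ ξ))) :
    ∀ g : G, (v g).comp Vρ = Vρ.comp (u g) := by
  have he_one : Tendsto e atTop (𝓝 1) := by simpa using he_apprR 1
  have hpos := inner_apply_star_mul_self_nonneg_of_completelyPositive hCP
  have hV : ∀ ζ, Vρ ζ = k 1 ζ := fun ζ => tendsto_nhds_unique (hVρ ζ)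
    (((continuous_ksgns_left hpos hk_inner hk_addl ζ).tendsto 1).comp he_one)
  intro g
  ext ξ
  rw [ContinuousLinearMap.comp_apply, ContinuousLinearMap.comp_apply, hV, hV, hv, map_one]

/-- For a nondegenerate u-covariant completely positive map ρ, with KSGNS
triple (Φ_ρ, V_ρ, E_ρ) where V_ρ ξ = lim_λ (e_λ ⊗ ξ + N_ρ) for an approximate unit (e_λ)
of A, and v the induced unitary representation of G on E_ρ, one has v_g V_ρ = V_ρ u_g. -/
theorem stmt5
    {A : Type*} [CStarAlgebra A]
    {B : Type*} [NonUnitalCStarAlgebra B] [PartialOrder B] [StarOrderedRing B]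
    {E : Type*} [NormedAddCommGroup E] [NormedSpace ℂ E] [SMul Bᵐᵒᵖ E] [CStarModuleOld B E]
    {G : Type*} [Group G]
    (α : G → A ≃⋆ₐ[ℂ] A)
    (hα : ∀ g h : G, α (g * h) = (α h).trans (α g))
    (u : G → E →L[ℂ] E)
    (hu_one : u 1 = ContinuousLinearMap.id ℂ E)
    (hu_mul : ∀ g h : G, u (g * h) = (u g).comp (u h))
    (hu_inner : ∀ (g : G) (x y : E), inner (𝕜 := B) (u g x) (u g y) = inner (𝕜 := B) x y)
    (hu_surj : ∀ g : G, Function.Surjective (u g))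
    (ρ : A →ₗ[ℂ] E →L[ℂ] E)
    (hCP : ∀ (n : ℕ) (x : Matrix (Fin n) (Fin n) A),
      (∃ y : Matrix (Fin n) (Fin n) A, x = yᴴ * y) →
      ∀ ξ : Fin n → E, 0 ≤ ∑ i, ∑ j, inner (𝕜 := B) (ξ i) (ρ (x i j) (ξ j)))
    (hcov : ∀ (g : G) (a : A), ρ (α g a) = ((u g).comp (ρ a)).comp (u g⁻¹))
    {Eρ : Type*} [NormedAddCommGroup Eρ] [NormedSpace ℂ Eρ] [SMul Bᵐᵒᵖ Eρ]
    [CStarModuleOld B Eρ] [CompleteSpace Eρ]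
    (k : A → E → Eρ)
    (hk_inner : ∀ (a b : A) (ξ η : E),
      inner (𝕜 := B) (k a ξ) (k b η) = inner (𝕜 := B) ξ (ρ (star a * b) η))
    (hk_addl : ∀ (a a' : A) (ξ : E), k (a + a') ξ = k a ξ + k a' ξ)
    (hk_addr : ∀ (a : A) (ξ η : E), k a (ξ + η) = k a ξ + k a η)
    (hk_smull : ∀ (c : ℂ) (a : A) (ξ : E), k (c • a) ξ = c • k a ξ)
    (hk_smulr : ∀ (c : ℂ) (a : A) (ξ : E), k a (c • ξ) = c • k a ξ)
    (hk_opsmul : ∀ (a : A) (ξ : E) (b : B),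
      k a (MulOpposite.op b • ξ) = MulOpposite.op b • k a ξ)
    (hk_dense : Dense (↑(Submodule.span ℂ {y : Eρ | ∃ (a : A) (ξ : E), y = k a ξ}) : Set Eρ))
    -- v : the unitary representation of G on E_ρ induced by u and α
    (v : G → Eρ →L[ℂ] Eρ)
    (hv : ∀ (g : G) (a : A) (ξ : E), v g (k a ξ) = k (α g a) (u g ξ))
    (hv_one : v 1 = ContinuousLinearMap.id ℂ Eρ)
    (hv_mul : ∀ g h : G, v (g * h) = (v g).comp (v h))
    (hv_inner : ∀ (g : G) (x y : Eρ), inner (𝕜 := B) (v g x) (v g y) = inner (𝕜 := B) x y)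
    (hv_surj : ∀ g : G, Function.Surjective (v g))
    [PartialOrder A] [StarOrderedRing A]
    -- (e_λ) is an approximate unit of A ...
    {Λ : Type*} [Nonempty Λ] [SemilatticeSup Λ]
    (e : Λ → A) (he_mono : Monotone e) (he_pos : ∀ l, 0 ≤ e l) (he_norm : ∀ l, ‖e l‖ ≤ 1)
    (he_apprR : ∀ a : A, Tendsto (fun l => a * e l) atTop (nhds a))
    (he_apprL : ∀ a : A, Tendsto (fun l => e l * a) atTop (nhds a))
    -- ... for which ρ is nondegenerate: ρ(e_λ) → 1 strictly
    (hρ_nondeg : ∀ ξ : E, Tendsto (fun l => ρ (e l) ξ) atTop (nhds ξ))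
    -- V_ρ ξ = lim_λ (e_λ ⊗ ξ + N_ρ)
    (Vρ : E →L[ℂ] Eρ)
    (hVρ : ∀ ξ : E, Tendsto (fun l => k (e l) ξ) atTop (nhds (Vρ ξ))) :
    ∀ g : G, (v g).comp Vρ = Vρ.comp (u g) :=
  stmt5_general α u ρ hCP k hk_inner hk_addl v hv e he_apprR Vρ hVρ
end

section
/- Suppose (Φ, v, F) and (Φ', v', F') are two covariant representations of a C*-dynamical system (G, A, α) on Hilbert B-modules, and W ∈ L_B(E, F), W' ∈ L_B(E, F') satisfy: ρ(a) = W* Φ(a) W = W'* Φ'(a) W' for all a ∈ A; the sets {Φ(a) W ξ} and {Φ'(a) W' ξ} span dense submodules of F and F' respectively; and v_g W = W u_g, v'_g W' = W' u_g for all g ∈ G. Then there is a unitary U ∈ L_B(F, F') with Φ'(a) U = U Φ(a) for all a ∈ A, v'_g U = U v_g for all g ∈ G, and W' = U W. -/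
/-!
The families `Φ a (W ξ)` and `Φ' a (W' ξ)` are total and have the same Gram matrix, both inner
products being `⟪ξ, ρ (star a * b) η⟫`; hence `Φ a (W ξ) ↦ Φ' a (W' ξ)` extends to a unitary `U`.
That `U` intertwines `Φ` and `v` is checked on this total family, using covariance and
`v g ∘ W = W ∘ u g`; and `W' = U W` because a nondegenerate representation of a unital algebra is
unital. Right Hilbert `B`-modules are handled as Mathlib's (left) Hilbert `Bᵐᵒᵖ`-modules.
-/

/-- The right Hilbert C⋆-module class `CStarModule` as it stood in Mathlib (December 2024):
`E` carries a right action of `A` (via `Aᵐᵒᵖ`) and an `A`-valued inner product. -/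
class OldCStarModule (A : outParam <| Type*) (E : Type*) [NonUnitalSemiring A] [StarRing A]
    [Module ℂ A] [AddCommGroup E] [Module ℂ E] [PartialOrder A] [SMul Aᵐᵒᵖ E] [Norm A] [Norm E]
    extends Inner A E where
  inner_add_right {x} {y} {z} : inner x (y + z) = inner x y + inner x z
  inner_self_nonneg {x} : 0 ≤ inner x x
  inner_self {x} : inner x x = 0 ↔ x = 0
  inner_op_smul_right {a : A} {x y : E} : inner x (MulOpposite.op a • y) = inner x y * a
  inner_smul_right_complex {z : ℂ} {x} {y} : inner x (z • y) = z • inner x y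
  star_inner x y : star (inner x y) = inner y x
  norm_eq_sqrt_norm_inner_self x : ‖x‖ = √‖inner x x‖

open MulOpposite
open scoped InnerProductSpace

namespace OldCStarModule

variable {B E : Type*} [NonUnitalCStarAlgebra B] [PartialOrder B]
  [AddCommGroup E] [Module ℂ E] [SMul Bᵐᵒᵖ E] [Norm E] [OldCStarModule B E]

/-- A right Hilbert `B`-module is a Hilbert `Bᵐᵒᵖ`-module in Mathlib's left-handed convention,
with inner product `op ⟪x, y⟫_B`. -/
instance toCStarModuleMulOpposite : CStarModule Bᵐᵒᵖ E where
  inner x y := op ⟪x, y⟫_B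
  inner_add_right := by simp [inner_add_right]
  inner_self_nonneg := op_nonneg.2 inner_self_nonneg
  inner_self := op_eq_zero_iff _ |>.trans inner_self
  inner_op_smul_right := by simp [inner_op_smul_right]
  inner_smul_right_complex := by simp [inner_smul_right_complex]
  star_inner x y := by simp [← op_star, star_inner]
  norm_eq_sqrt_norm_inner_self x := norm_eq_sqrt_norm_inner_self (A := B) x

theorem inner_mulOpposite (x y : E) : ⟪x, y⟫_(Bᵐᵒᵖ) = op ⟪x, y⟫_B := rfl

end OldCStarModule

theorem ContinuousLinearMap.surjective_of_isometry_of_dense_span {𝕜 E F : Type*} [Semiring 𝕜]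
    [NormedAddCommGroup E] [Module 𝕜 E] [CompleteSpace E] [NormedAddCommGroup F] [Module 𝕜 F]
    {U : E →L[𝕜] F} (hU : Isometry U) {s : Set F} (hs : Dense (Submodule.span 𝕜 s : Set F))
    (hsU : s ⊆ Set.range U) : Function.Surjective U := by
  have hspan : Submodule.span 𝕜 s ≤ LinearMap.range (U : E →ₗ[𝕜] F) :=
    Submodule.span_le.2 (by rwa [LinearMap.coe_range])
  have hrange : Dense (Set.range U) := hs.mono hspan
  rw [← Set.range_eq_univ, ← hU.isClosedEmbedding.isClosed_range.closure_eq, hrange.closure_eq]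

namespace CStarModule

variable {A F F' : Type*} [NonUnitalCStarAlgebra A] [PartialOrder A]
  [SMul A F] [NormedAddCommGroup F] [NormedSpace ℂ F] [CStarModule A F]
  [SMul A F'] [NormedAddCommGroup F'] [NormedSpace ℂ F'] [CStarModule A F']

theorem norm_eq_of_inner_self_eq {x : F} {x' : F'} (h : ⟪x', x'⟫_A = ⟪x, x⟫_A) : ‖x'‖ = ‖x‖ := by
  rw [norm_eq_sqrt_norm_inner_self (A := A), h, ← norm_eq_sqrt_norm_inner_self]

theorem inner_snd_eq_inner_fst_of_mem_span {ι : Type*} {x : ι → F} {y : ι → F'}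
    (hxy : ∀ i j, ⟪y i, y j⟫_A = ⟪x i, x j⟫_A) {p q : F × F'}
    (hp : p ∈ Submodule.span ℂ (Set.range fun i => (x i, y i)))
    (hq : q ∈ Submodule.span ℂ (Set.range fun i => (x i, y i))) :
    ⟪p.2, q.2⟫_A = ⟪p.1, q.1⟫_A := by
  induction hp, hq using Submodule.span_induction₂ with
  | mem_mem p q hp hq =>
    obtain ⟨i, rfl⟩ := hp
    obtain ⟨j, rfl⟩ := hq
    exact hxy i j
  | zero_left => simp
  | zero_right => simp
  | add_left => simp [*]
  | add_right => simp [*]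
  | smul_left => simp [*]
  | smul_right => simp [*]

variable [StarOrderedRing A]

/-- On the span `S` of the graph `{(x i, y i)}` the first projection is isometric with dense range,
so (second projection) ∘ (first projection)⁻¹ extends continuously to `F`. -/
theorem exists_inner_preserving_map_of_inner_eq [CompleteSpace F'] {ι : Type*} {x : ι → F}
    {y : ι → F'} (hx : Dense (Submodule.span ℂ (Set.range x) : Set F))
    (hxy : ∀ i j, ⟪y i, y j⟫_A = ⟪x i, x j⟫_A) :
    ∃ U : F →L[ℂ] F', (∀ i, U (x i) = y i) ∧ ∀ a b, ⟪U a, U b⟫_A = ⟪a, b⟫_A := by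
  set S := Submodule.span ℂ (Set.range fun i => (x i, y i))
  have hS (p q : S) : ⟪(p : F × F').2, (q : F × F').2⟫_A = ⟪(p : F × F').1, (q : F × F').1⟫_A :=
    inner_snd_eq_inner_fst_of_mem_span hxy p.2 q.2
  set φ : S →L[ℂ] F := (ContinuousLinearMap.fst ℂ F F').comp S.subtypeL
  set ψ : S →L[ℂ] F' := (ContinuousLinearMap.snd ℂ F F').comp S.subtypeL
  have hφ_isometry : Isometry φ := AddMonoidHomClass.isometry_of_norm φ fun p => by
    change ‖(p : F × F').1‖ = max ‖(p : F × F').1‖ ‖(p : F × F').2‖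
    rw [norm_eq_of_inner_self_eq (hS p p), max_self]
  have hφ_dense : DenseRange φ := by
    have : Set.range φ = Submodule.span ℂ (Set.range x) := by
      have h : Set.range φ = Prod.fst '' (S : Set (F × F')) := by ext; simp [φ]
      rw [h, ← LinearMap.coe_fst (R := ℂ) (M := F) (M₂ := F'), ← Submodule.map_coe,
        Submodule.map_span, ← Set.range_comp]
      rfl
    rw [DenseRange, this]
    exact hx
  have hUφ (p : S) : ψ.extend φ (φ p) = ψ p :=
    ψ.extend_eq hφ_dense hφ_isometry.isUniformInducing p
  refine ⟨ψ.extend φ, fun i => hUφ ⟨_, Submodule.subset_span ⟨i, rfl⟩⟩, fun a b => ?_⟩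
  have hcont : Continuous fun p : F × F => ⟪ψ.extend φ p.1, ψ.extend φ p.2⟫_A := by fun_prop
  have h := (hφ_dense.prodMap hφ_dense).equalizer hcont continuous_inner
    (funext fun pq => by simp only [Function.comp_apply, Prod.map, hUφ]; exact hS pq.1 pq.2)
  exact congrFun h (a, b)

theorem exists_unitary_of_inner_eq [CompleteSpace F] [CompleteSpace F'] {ι : Type*} {x : ι → F} {y : ι → F'}
    (hx : Dense (Submodule.span ℂ (Set.range x) : Set F))
    (hy : Dense (Submodule.span ℂ (Set.range y) : Set F'))
    (hxy : ∀ i j, ⟪y i, y j⟫_A = ⟪x i, x j⟫_A) :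
    ∃ U : F →L[ℂ] F', (∀ a b, ⟪U a, U b⟫_A = ⟪a, b⟫_A) ∧ Function.Surjective U ∧
      ∀ i, U (x i) = y i := by
  obtain ⟨U, hUxy, hU⟩ := exists_inner_preserving_map_of_inner_eq hx hxy
  have hU_isometry : Isometry U :=
    AddMonoidHomClass.isometry_of_norm U fun a => norm_eq_of_inner_self_eq (hU a a)
  refine ⟨U, hU, U.surjective_of_isometry_of_dense_span hU_isometry hy ?_, hUxy⟩
  rintro _ ⟨i, rfl⟩
  exact ⟨x i, hUxy i⟩

end CStarModule

section Representation

variable {A B E F F' G : Type*} [NormedAddCommGroup E] [NormedSpace ℂ E]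
  [NormedAddCommGroup F] [NormedSpace ℂ F] [NormedAddCommGroup F'] [NormedSpace ℂ F']
  {Φ : A → F →L[ℂ] F} {Φ' : A → F' →L[ℂ] F'} {W : E →L[ℂ] F} {W' : E →L[ℂ] F'}
  {U : F →L[ℂ] F'}

theorem inner_map_apply_map_apply [Mul A] [Star A] [Inner B E] [Inner B F]
    (hΦ_mul : ∀ a b, Φ (a * b) = (Φ a).comp (Φ b))
    (hΦ_star : ∀ a x y, ⟪Φ a x, y⟫_B = ⟪x, Φ (star a) y⟫_B)
    {Wstar : F →L[ℂ] E} (hW_adj : ∀ ξ x, ⟪W ξ, x⟫_B = ⟪ξ, Wstar x⟫_B) (a b : A) (ξ η : E) :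
    ⟪Φ a (W ξ), Φ b (W η)⟫_B = ⟪ξ, (Wstar.comp (Φ (star a * b))).comp W η⟫_B := by
  rw [hΦ_star, hW_adj, hΦ_mul]
  rfl

theorem map_one_eq_id_of_dense_span [MulOneClass A]
    (hΦ_mul : ∀ a b, Φ (a * b) = (Φ a).comp (Φ b))
    (hΦ : Dense (Submodule.span ℂ {y | ∃ (a : A) (z : F), y = Φ a z} : Set F)) :
    Φ 1 = ContinuousLinearMap.id ℂ F := by
  refine ContinuousLinearMap.ext_on hΦ ?_
  rintro _ ⟨a, z, rfl⟩
  rw [ContinuousLinearMap.id_apply, ← ContinuousLinearMap.comp_apply, ← hΦ_mul, one_mul]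

theorem apply_map_apply_of_covariant [Group G] {α : G → A → A} {v : G → F →L[ℂ] F}
    (hv_one : v 1 = ContinuousLinearMap.id ℂ F) (hv_mul : ∀ g h, v (g * h) = (v g).comp (v h))
    (hcov : ∀ g a, Φ (α g a) = ((v g).comp (Φ a)).comp (v g⁻¹)) (g : G) (a : A) (z : F) :
    v g (Φ a z) = Φ (α g a) (v g z) := by
  rw [hcov, ContinuousLinearMap.comp_apply, ← ContinuousLinearMap.comp_apply (v g⁻¹), ← hv_mul,
    inv_mul_cancel, hv_one]
  rfl

theorem map_comp_eq_comp_map_of_dense [Mul A]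
    (hb : Dense (Submodule.span ℂ {y | ∃ (a : A) (ξ : E), y = Φ a (W ξ)} : Set F))
    (hU : ∀ a ξ, U (Φ a (W ξ)) = Φ' a (W' ξ))
    (hΦ_mul : ∀ a b, Φ (a * b) = (Φ a).comp (Φ b))
    (hΦ'_mul : ∀ a b, Φ' (a * b) = (Φ' a).comp (Φ' b)) (a : A) :
    (Φ' a).comp U = U.comp (Φ a) := by
  refine ContinuousLinearMap.ext_on hb ?_
  rintro _ ⟨b, ξ, rfl⟩
  simp only [ContinuousLinearMap.comp_apply, hU]
  rw [← ContinuousLinearMap.comp_apply (Φ' a), ← hΦ'_mul, ← ContinuousLinearMap.comp_apply (Φ a),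
    ← hΦ_mul, hU]

theorem comp_eq_comp_of_covariant_of_dense
    (hb : Dense (Submodule.span ℂ {y | ∃ (a : A) (ξ : E), y = Φ a (W ξ)} : Set F))
    (hU : ∀ a ξ, U (Φ a (W ξ)) = Φ' a (W' ξ))
    {β : A → A} {u : E →L[ℂ] E} {v : F →L[ℂ] F} {v' : F' →L[ℂ] F'}
    (hvΦ : ∀ a z, v (Φ a z) = Φ (β a) (v z)) (hv'Φ' : ∀ a z, v' (Φ' a z) = Φ' (β a) (v' z))
    (hvW : ∀ ξ, v (W ξ) = W (u ξ)) (hv'W' : ∀ ξ, v' (W' ξ) = W' (u ξ)) :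
    v'.comp U = U.comp v := by
  refine ContinuousLinearMap.ext_on hb ?_
  rintro _ ⟨a, ξ, rfl⟩
  simp only [ContinuousLinearMap.comp_apply]
  rw [hU, hv'Φ', hvΦ, hvW, hv'W', hU]

theorem eq_comp_of_dense [MulOneClass A]
    (hb : Dense (Submodule.span ℂ {y | ∃ (a : A) (ξ : E), y = Φ a (W ξ)} : Set F))
    (hU : ∀ a ξ, U (Φ a (W ξ)) = Φ' a (W' ξ))
    (hΦ_mul : ∀ a b, Φ (a * b) = (Φ a).comp (Φ b))
    (hΦ'_mul : ∀ a b, Φ' (a * b) = (Φ' a).comp (Φ' b))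
    (hb' : Dense (Submodule.span ℂ {y | ∃ (a : A) (ξ : E), y = Φ' a (W' ξ)} : Set F')) :
    W' = U.comp W := by
  have hΦ_one := map_one_eq_id_of_dense_span hΦ_mul <| hb.mono <|
    Submodule.span_mono (by rintro _ ⟨a, ξ, rfl⟩; exact ⟨a, W ξ, rfl⟩)
  have hΦ'_one := map_one_eq_id_of_dense_span hΦ'_mul <| hb'.mono <|
    Submodule.span_mono (by rintro _ ⟨a, ξ, rfl⟩; exact ⟨a, W' ξ, rfl⟩)
  ext ξ
  simpa [hΦ_one, hΦ'_one] using (hU 1 ξ).symm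

end Representation

theorem stmt6_general {A : Type*} [CStarAlgebra A]
    {B : Type*} [NonUnitalCStarAlgebra B] [PartialOrder B] [StarOrderedRing B]
    {E : Type*} [NormedAddCommGroup E] [NormedSpace ℂ E] [SMul Bᵐᵒᵖ E] [OldCStarModule B E]
    {F : Type*} [NormedAddCommGroup F] [NormedSpace ℂ F] [SMul Bᵐᵒᵖ F] [OldCStarModule B F]
    [CompleteSpace F]
    {F' : Type*} [NormedAddCommGroup F'] [NormedSpace ℂ F'] [SMul Bᵐᵒᵖ F'] [OldCStarModule B F']
    [CompleteSpace F']
    {G : Type*} [Group G]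
    (α : G → A ≃⋆ₐ[ℂ] A)
    -- u : unitary representation of G on E
    (u : G → E →L[ℂ] E)
    (ρ : A →ₗ[ℂ] E →L[ℂ] E)
    -- (Φ, v, F) : a covariant representation of (G, A, α) on F
    (Φ : A →ₗ[ℂ] F →L[ℂ] F)
    (hΦ_mul : ∀ a b : A, Φ (a * b) = (Φ a).comp (Φ b))
    (hΦ_star : ∀ (a : A) (x y : F),
      inner (𝕜 := B) (Φ a x) y = inner (𝕜 := B) x (Φ (star a) y))
    (v : G → F →L[ℂ] F)
    (hv_one : v 1 = ContinuousLinearMap.id ℂ F)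
    (hv_mul : ∀ g h : G, v (g * h) = (v g).comp (v h))
    (hcovF : ∀ (g : G) (a : A), Φ (α g a) = ((v g).comp (Φ a)).comp (v g⁻¹))
    -- (Φ', v', F') : another covariant representation of (G, A, α) on F'
    (Φ' : A →ₗ[ℂ] F' →L[ℂ] F')
    (hΦ'_mul : ∀ a b : A, Φ' (a * b) = (Φ' a).comp (Φ' b))
    (hΦ'_star : ∀ (a : A) (x y : F'),
      inner (𝕜 := B) (Φ' a x) y = inner (𝕜 := B) x (Φ' (star a) y))
    (v' : G → F' →L[ℂ] F')
    (hv'_one : v' 1 = ContinuousLinearMap.id ℂ F')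
    (hv'_mul : ∀ g h : G, v' (g * h) = (v' g).comp (v' h))
    (hcovF' : ∀ (g : G) (a : A), Φ' (α g a) = ((v' g).comp (Φ' a)).comp (v' g⁻¹))
    -- W ∈ L_B(E, F) and W' ∈ L_B(E, F') (adjointable operators)
    (W : E →L[ℂ] F) (Wstar : F →L[ℂ] E)
    (hW_adj : ∀ (ξ : E) (x : F), inner (𝕜 := B) (W ξ) x = inner (𝕜 := B) ξ (Wstar x))
    (W' : E →L[ℂ] F') (W'star : F' →L[ℂ] E)
    (hW'_adj : ∀ (ξ : E) (x : F'), inner (𝕜 := B) (W' ξ) x = inner (𝕜 := B) ξ (W'star x))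
    -- (a) ρ(a) = W* Φ(a) W = W'* Φ'(a) W'
    (ha : ∀ a : A, ρ a = (Wstar.comp (Φ a)).comp W)
    (ha' : ∀ a : A, ρ a = (W'star.comp (Φ' a)).comp W')
    -- (b) the ranges are total
    (hb : Dense (↑(Submodule.span ℂ {y : F | ∃ (a : A) (ξ : E), y = Φ a (W ξ)}) : Set F))
    (hb' : Dense (↑(Submodule.span ℂ {y : F' | ∃ (a : A) (ξ : E), y = Φ' a (W' ξ)}) : Set F'))
    -- (c) intertwining relations
    (hc : ∀ g : G, (v g).comp W = W.comp (u g))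
    (hc' : ∀ g : G, (v' g).comp W' = W'.comp (u g)) :
    ∃ U : F →L[ℂ] F',
      (∀ x y : F, inner (𝕜 := B) (U x) (U y) = inner (𝕜 := B) x y) ∧
      Function.Surjective U ∧
      (∀ a : A, (Φ' a).comp U = U.comp (Φ a)) ∧
      (∀ g : G, (v' g).comp U = U.comp (v g)) ∧
      W' = U.comp W := by
  have hx : Dense (Submodule.span ℂ (Set.range fun p : A × E => Φ p.1 (W p.2)) : Set F) := by
    simpa only [Set.range, Prod.exists, eq_comm] using hb
  have hx' : Dense (Submodule.span ℂ (Set.range fun p : A × E => Φ' p.1 (W' p.2)) : Set F') := by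
    simpa only [Set.range, Prod.exists, eq_comm] using hb'
  have hΦ_gram := inner_map_apply_map_apply hΦ_mul hΦ_star hW_adj
  have hΦ'_gram := inner_map_apply_map_apply hΦ'_mul hΦ'_star hW'_adj
  obtain ⟨U, hU_inner, hU_surj, hUΦ⟩ := CStarModule.exists_unitary_of_inner_eq (A := Bᵐᵒᵖ) hx hx'
    fun p q => by simp only [OldCStarModule.inner_mulOpposite, hΦ_gram, hΦ'_gram, ← ha, ← ha']
  replace hUΦ (a : A) (ξ : E) : U (Φ a (W ξ)) = Φ' a (W' ξ) := hUΦ (a, ξ)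
  refine ⟨U, fun x y => congrArg unop (hU_inner x y), hU_surj,
    map_comp_eq_comp_map_of_dense hb hUΦ hΦ_mul hΦ'_mul, fun g => ?_,
    eq_comp_of_dense hb hUΦ hΦ_mul hΦ'_mul hb'⟩
  exact comp_eq_comp_of_covariant_of_dense hb hUΦ
    (apply_map_apply_of_covariant hv_one hv_mul hcovF g)
    (apply_map_apply_of_covariant hv'_one hv'_mul hcovF' g)
    (ContinuousLinearMap.ext_iff.1 (hc g)) (ContinuousLinearMap.ext_iff.1 (hc' g))

/-- Uniqueness (up to unitary equivalence) in the covariant KSGNS construction: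
two covariant representations (Φ, v, F), (Φ', v', F') together with W, W' implementing the
same completely positive map ρ, with total ranges and intertwining v_g W = W u_g,
v'_g W' = W' u_g, are unitarily equivalent via a unitary U with Φ'(a) U = U Φ(a),
v'_g U = U v_g and W' = U W. -/
theorem stmt6 {A : Type*} [CStarAlgebra A]
    {B : Type*} [NonUnitalCStarAlgebra B] [PartialOrder B] [StarOrderedRing B]
    {E : Type*} [NormedAddCommGroup E] [NormedSpace ℂ E] [SMul Bᵐᵒᵖ E] [OldCStarModule B E]
    {F : Type*} [NormedAddCommGroup F] [NormedSpace ℂ F] [SMul Bᵐᵒᵖ F] [OldCStarModule B F]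
    [CompleteSpace F]
    {F' : Type*} [NormedAddCommGroup F'] [NormedSpace ℂ F'] [SMul Bᵐᵒᵖ F'] [OldCStarModule B F']
    [CompleteSpace F']
    {G : Type*} [Group G]
    (α : G → A ≃⋆ₐ[ℂ] A)
    (hα : ∀ g h : G, α (g * h) = (α h).trans (α g))
    -- u : unitary representation of G on E
    (u : G → E →L[ℂ] E)
    (hu_one : u 1 = ContinuousLinearMap.id ℂ E)
    (hu_mul : ∀ g h : G, u (g * h) = (u g).comp (u h))
    (hu_inner : ∀ (g : G) (x y : E), inner (𝕜 := B) (u g x) (u g y) = inner (𝕜 := B) x y)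
    (hu_surj : ∀ g : G, Function.Surjective (u g))
    (ρ : A →ₗ[ℂ] E →L[ℂ] E)
    -- (Φ, v, F) : a covariant representation of (G, A, α) on F
    (Φ : A →ₗ[ℂ] F →L[ℂ] F)
    (hΦ_mul : ∀ a b : A, Φ (a * b) = (Φ a).comp (Φ b))
    (hΦ_star : ∀ (a : A) (x y : F),
      inner (𝕜 := B) (Φ a x) y = inner (𝕜 := B) x (Φ (star a) y))
    (v : G → F →L[ℂ] F)
    (hv_one : v 1 = ContinuousLinearMap.id ℂ F)
    (hv_mul : ∀ g h : G, v (g * h) = (v g).comp (v h))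
    (hv_inner : ∀ (g : G) (x y : F), inner (𝕜 := B) (v g x) (v g y) = inner (𝕜 := B) x y)
    (hv_surj : ∀ g : G, Function.Surjective (v g))
    (hcovF : ∀ (g : G) (a : A), Φ (α g a) = ((v g).comp (Φ a)).comp (v g⁻¹))
    -- (Φ', v', F') : another covariant representation of (G, A, α) on F'
    (Φ' : A →ₗ[ℂ] F' →L[ℂ] F')
    (hΦ'_mul : ∀ a b : A, Φ' (a * b) = (Φ' a).comp (Φ' b))
    (hΦ'_star : ∀ (a : A) (x y : F'),
      inner (𝕜 := B) (Φ' a x) y = inner (𝕜 := B) x (Φ' (star a) y))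
    (v' : G → F' →L[ℂ] F')
    (hv'_one : v' 1 = ContinuousLinearMap.id ℂ F')
    (hv'_mul : ∀ g h : G, v' (g * h) = (v' g).comp (v' h))
    (hv'_inner : ∀ (g : G) (x y : F'),
      inner (𝕜 := B) (v' g x) (v' g y) = inner (𝕜 := B) x y)
    (hv'_surj : ∀ g : G, Function.Surjective (v' g))
    (hcovF' : ∀ (g : G) (a : A), Φ' (α g a) = ((v' g).comp (Φ' a)).comp (v' g⁻¹))
    -- W ∈ L_B(E, F) and W' ∈ L_B(E, F') (adjointable operators)
    (W : E →L[ℂ] F) (Wstar : F →L[ℂ] E)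
    (hW_adj : ∀ (ξ : E) (x : F), inner (𝕜 := B) (W ξ) x = inner (𝕜 := B) ξ (Wstar x))
    (W' : E →L[ℂ] F') (W'star : F' →L[ℂ] E)
    (hW'_adj : ∀ (ξ : E) (x : F'), inner (𝕜 := B) (W' ξ) x = inner (𝕜 := B) ξ (W'star x))
    -- (a) ρ(a) = W* Φ(a) W = W'* Φ'(a) W'
    (ha : ∀ a : A, ρ a = (Wstar.comp (Φ a)).comp W)
    (ha' : ∀ a : A, ρ a = (W'star.comp (Φ' a)).comp W')
    -- (b) the ranges are total
    (hb : Dense (↑(Submodule.span ℂ {y : F | ∃ (a : A) (ξ : E), y = Φ a (W ξ)}) : Set F))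
    (hb' : Dense (↑(Submodule.span ℂ {y : F' | ∃ (a : A) (ξ : E), y = Φ' a (W' ξ)}) : Set F'))
    -- (c) intertwining relations
    (hc : ∀ g : G, (v g).comp W = W.comp (u g))
    (hc' : ∀ g : G, (v' g).comp W' = W'.comp (u g)) :
    ∃ U : F →L[ℂ] F',
      (∀ x y : F, inner (𝕜 := B) (U x) (U y) = inner (𝕜 := B) x y) ∧
      Function.Surjective U ∧
      (∀ a : A, (Φ' a).comp U = U.comp (Φ a)) ∧
      (∀ g : G, (v' g).comp U = U.comp (v g)) ∧
      W' = U.comp W :=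
  stmt6_general α u ρ Φ hΦ_mul hΦ_star v hv_one hv_mul hcovF Φ' hΦ'_mul hΦ'_star v' hv'_one hv'_mul
    hcovF' W Wstar hW_adj W' W'star hW'_adj ha ha' hb hb' hc hc'
end
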